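/- Let (rₖ)₀≤k≤N be a sequence of C¹ curves rₖ : [0,l] → ℝ³ with |∂ₛr₀(s)| = 1 for all s, satisfying the orthogonality constraint ∂ₛ(rₖ₊₁ − rₖ)(s) · ∂ₛrₖ(s) = 0 and the closeness condition |∂ₛrₖ₊₁(s) − ∂ₛrₖ(s)| ≤ τ² for all s and k. Then for all s and all k: 1 ≤ |∂ₛrₖ(s)| ≤ |∂ₛrₖ₊₁(s)| ≤ 1 + Nτ². -/
import Mathlib


open scoped RealInnerProductSpace

theorem discrete_length_increase
    (l τ : ℝ) (hl : 0 < l) (hτ : 0 < τ) (N : ℕ)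
    (r rd : ℕ → ℝ → EuclideanSpace ℝ (Fin 3))
    (hderiv : ∀ k, ∀ s ∈ Set.Icc 0 l, HasDerivAt (r k) (rd k s) s)
    (hinit : ∀ s ∈ Set.Icc 0 l, ‖rd 0 s‖ = 1)
    (horth : ∀ k < N, ∀ s ∈ Set.Icc 0 l, ⟪rd (k + 1) s - rd k s, rd k s⟫ = 0)
    (hclose : ∀ k < N, ∀ s ∈ Set.Icc 0 l, ‖rd (k + 1) s - rd k s‖ ≤ τ ^ 2) :
    ∀ k ≤ N, ∀ s ∈ Set.Icc 0 l,
      1 ≤ ‖rd k s‖ ∧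
      (k < N → ‖rd k s‖ ≤ ‖rd (k + 1) s‖) ∧
      ‖rd k s‖ ≤ 1 + (N : ℝ) * τ ^ 2 := by
  intro k hk s hs
  have mono : ∀ j < N, ‖rd j s‖ ≤ ‖rd (j + 1) s‖ := by
    intro j hj
    have h0 := horth j hj s hs
    have e : rd (j + 1) s = rd j s + (rd (j + 1) s - rd j s) := by abel
    have h1 : ‖rd j s‖ ^ 2 ≤ ‖rd (j + 1) s‖ ^ 2 := by
      calc ‖rd j s‖ ^ 2 ≤ ‖rd j s‖ ^ 2 + ‖rd (j + 1) s - rd j s‖ ^ 2 :=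
            le_add_of_nonneg_right (sq_nonneg _)
        _ = ‖rd (j + 1) s‖ ^ 2 := by
            conv_rhs => rw [e]
            rw [norm_add_sq_real, real_inner_comm, h0]; ring
    nlinarith [norm_nonneg (rd j s), norm_nonneg (rd (j + 1) s)]
  have lower : ∀ j ≤ N, 1 ≤ ‖rd j s‖ := by
    intro j hj
    induction j with
    | zero => rw [hinit s hs]
    | succ n ih =>
      have hn : n < N := Nat.lt_of_succ_le hj
      exact (ih hn.le).trans (mono n hn)
  have upper : ∀ j ≤ N, ‖rd j s‖ ≤ 1 + (j : ℝ) * τ ^ 2 := by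
    intro j hj
    induction j with
    | zero => simp [hinit s hs]
    | succ n ih =>
      have hn : n < N := Nat.lt_of_succ_le hj
      have h1 : ‖rd (n + 1) s‖ ≤ ‖rd n s‖ + ‖rd (n + 1) s - rd n s‖ := by
        have := norm_add_le (rd n s) (rd (n + 1) s - rd n s)
        simpa using this
      have := hclose n hn s hs
      have := ih hn.le
      push_cast
      linarith
  refine ⟨lower k hk, fun h => mono k h, (upper k hk).trans ?_⟩
  have : (k : ℝ) ≤ N := by exact_mod_cast hk
  nlinarith [sq_nonneg τ]
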